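/- Let p ∈ P(w) with w in the simplex {w : ∑ w_i = 1, w_i ≥ ε}, where ε < ρⁿ/n and ρ ∈ (0,1] is the envy-threshold constant. Then there exists a player i with w_i > ε who envies no other player under p. -/

import Mathlib

/-!
Suppose every player of weight above `ε` envies somebody, and follow an envy chain starting at a
player of weight at least `1/n`. If `i` envies `h` and `w h ≤ ρ w i`, then swapping the bundles
of `i` and `h` in every allocation of the support where `i` gains raises the weighted welfare: by
the choice of `ρ`, `h` loses at most half of what `i` gains. So weights shrink by a factor of at
most `ρ` along the chain, and its first `n + 1` players all weigh at least `ρⁿ/n > ε`. Among them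
the chain must reach a cycle of the envy graph. Rotating bundles along that cycle is realised by
relabelling the allocations, and raises welfare again, contradicting optimality of `p`.
-/

open Finset Function

namespace MixedAllocation

variable {ι κ β : Type*}

section Relabelling

variable (A : κ → ι → β)

theorem exists_comp_swap [DecidableEq ι]
    (hswap : ∀ j : κ, ∀ g h : ι, ∃ l : κ,
      (∀ i, i ≠ g → i ≠ h → A l i = A j i) ∧ A l g = A j h ∧ A l h = A j g)
    (j : κ) (g h : ι) : ∃ l, A l = A j ∘ Equiv.swap g h := by
  obtain ⟨l, hother, hg, hh⟩ := hswap j g h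
  refine ⟨l, funext fun i => ?_⟩
  rcases eq_or_ne i g with rfl | hig
  · simpa using hg
  rcases eq_or_ne i h with rfl | hih
  · simpa using hh
  · simpa [Equiv.swap_apply_of_ne_of_ne hig hih] using hother i hig hih

theorem exists_comp_perm [Finite ι] [DecidableEq ι]
    (hswap : ∀ j g h, ∃ l, A l = A j ∘ Equiv.swap g h) (π : Equiv.Perm ι) :
    ∀ j, ∃ l, A l = A j ∘ π := by
  induction π using Equiv.Perm.swap_induction_on with
  | one => exact fun j => ⟨j, rfl⟩
  | swap_mul f g h _ ih =>
    intro j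
    obtain ⟨j', hj'⟩ := hswap j g h
    obtain ⟨l, hl⟩ := ih j'
    exact ⟨l, by rw [hl, hj']; rfl⟩

end Relabelling

variable [Fintype ι] [Fintype κ]

def value (A : κ → ι → β) (u : ι → β → ℝ) (p : κ → ℝ) (i h : ι) : ℝ :=
  ∑ j, p j * u i (A j h)

def welfare (A : κ → ι → β) (u : ι → β → ℝ) (w : ι → ℝ) (p : κ → ℝ) : ℝ :=
  ∑ i, w i * value A u p i i

def allocWelfare (w : ι → ℝ) (u : ι → β → ℝ) (a : ι → β) : ℝ :=
  ∑ i, w i * u i (a i)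

variable (A : κ → ι → β) (u : ι → β → ℝ) (w : ι → ℝ) (p : κ → ℝ)

theorem sum_mul_allocWelfare_comp (f : ι → ι) :
    ∑ j, p j * allocWelfare w u (A j ∘ f) = ∑ i, w i * value A u p i (f i) := by
  simp only [allocWelfare, value, comp_apply, mul_sum]
  rw [sum_comm]
  exact sum_congr rfl fun i _ => sum_congr rfl fun j _ => by ring

theorem welfare_eq_sum_mul_allocWelfare :
    welfare A u w p = ∑ j, p j * allocWelfare w u (A j) :=
  (sum_mul_allocWelfare_comp A u w p id).symm

theorem allocWelfare_comp_swap [DecidableEq ι] (a : ι → β) {i h : ι} (hih : i ≠ h) :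
    allocWelfare w u (a ∘ Equiv.swap i h) = allocWelfare w u a +
      (w i * (u i (a h) - u i (a i)) + w h * (u h (a i) - u h (a h))) := by
  have hdiff : allocWelfare w u (a ∘ Equiv.swap i h) - allocWelfare w u a =
      ∑ x, w x * (u x (a (Equiv.swap i h x)) - u x (a x)) := by
    simp only [allocWelfare, comp_apply, ← sum_sub_distrib, mul_sub]
  rw [Fintype.sum_eq_add i h hih fun x hx => by
    rw [Equiv.swap_apply_of_ne_of_ne hx.1 hx.2, sub_self, mul_zero]] at hdiff
  rw [Equiv.swap_apply_left, Equiv.swap_apply_right] at hdiff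
  linarith

def IsOptimal (A : κ → ι → β) (u : ι → β → ℝ) (w : ι → ℝ) (p : κ → ℝ) : Prop :=
  ∀ q : κ → ℝ, (∀ j, 0 ≤ q j) → ∑ j, q j = 1 → welfare A u w q ≤ welfare A u w p

variable {A u w p}

theorem sum_mul_le_zero_of_isOptimal (hp0 : ∀ j, 0 ≤ p j) (hp1 : ∑ j, p j = 1)
    (hopt : IsOptimal A u w p) (δ : κ → ℝ)
    (himp : ∀ j, ∃ l, allocWelfare w u (A j) + δ j ≤ allocWelfare w u (A l)) :
    ∑ j, p j * δ j ≤ 0 := by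
  classical
  choose σ hσ using himp
  -- the pushforward of `p` along `σ` is a competing lottery
  set q : κ → ℝ := fun l => ∑ j ∈ univ.filter (σ · = l), p j
  have hq : ∀ F : κ → ℝ, ∑ l, q l * F l = ∑ j, p j * F (σ j) := fun F => by
    simp only [q, sum_mul]
    rw [← sum_fiberwise univ σ fun j => p j * F (σ j)]
    exact sum_congr rfl fun l _ => sum_congr rfl fun j hj => by rw [(mem_filter.mp hj).2]
  have hq1 : ∑ l, q l = 1 := by simpa [hp1] using hq fun _ => 1
  have hle := hopt q (fun l => sum_nonneg fun j _ => hp0 j) hq1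
  rw [welfare_eq_sum_mul_allocWelfare, welfare_eq_sum_mul_allocWelfare, hq] at hle
  have hσle : ∑ j, p j * (allocWelfare w u (A j) + δ j) ≤ ∑ j, p j * allocWelfare w u (A (σ j)) :=
    sum_le_sum fun j _ => mul_le_mul_of_nonneg_left (hσ j) (hp0 j)
  simp only [mul_add, sum_add_distrib] at hσle
  linarith

theorem mul_lt_of_value_lt [DecidableEq ι] (hp0 : ∀ j, 0 ≤ p j) (hp1 : ∑ j, p j = 1)
    (hopt : IsOptimal A u w p) {i h : ι} {ρ : ℝ} (hswap : ∀ j, ∃ l, A l = A j ∘ Equiv.swap i h)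
    (hρ : ∀ j, u i (A j i) < u i (A j h) → u h (A j i) < u h (A j h) →
      2 * ρ * (u h (A j h) - u h (A j i)) ≤ u i (A j h) - u i (A j i))
    (hwi : 0 < w i) (hwh : 0 ≤ w h) (henvy : value A u p i i < value A u p i h) :
    ρ * w i < w h := by
  by_contra! hwρ
  have hih : i ≠ h := by rintro rfl; exact henvy.false
  -- swapping where `i` gains, `h` loses at most half of `i`'s weighted gain
  refine (sum_mul_le_zero_of_isOptimal hp0 hp1 hopt
    (fun j => w i / 2 * (u i (A j h) - u i (A j i))) fun j => ?_).not_gt ?_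
  · by_cases hgain : u i (A j i) < u i (A j h)
    · obtain ⟨l, hl⟩ := hswap j
      refine ⟨l, ?_⟩
      rw [hl, allocWelfare_comp_swap u w (A j) hih, add_le_add_iff_left]
      by_cases hloss : u h (A j i) < u h (A j h)
      · have hE : 0 ≤ u h (A j h) - u h (A j i) := by linarith
        have h1 := mul_le_mul_of_nonneg_right hwρ hE
        have h2 := mul_le_mul_of_nonneg_left (hρ j hgain hloss) hwi.le
        linarith
      · nlinarith
    · exact ⟨j, by nlinarith⟩
  · have hsum : ∑ j, p j * (w i / 2 * (u i (A j h) - u i (A j i))) =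
        w i / 2 * (value A u p i h - value A u p i i) := by
      simp only [value, mul_sum, ← sum_sub_distrib]
      exact sum_congr rfl fun j _ => by ring
    rw [hsum]
    exact mul_pos (half_pos hwi) (sub_pos.mpr henvy)

theorem not_value_lt_of_perm (hp0 : ∀ j, 0 ≤ p j) (hp1 : ∑ j, p j = 1)
    (hopt : IsOptimal A u w p) (hperm : ∀ (π : Equiv.Perm ι) j, ∃ l, A l = A j ∘ π)
    (hw : ∀ i, 0 ≤ w i) (π : Equiv.Perm ι) (hle : ∀ i, value A u p i i ≤ value A u p i (π i))
    {x : ι} (hwx : 0 < w x) : ¬ value A u p x x < value A u p x (π x) := by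
  intro hlt
  refine (sum_mul_le_zero_of_isOptimal hp0 hp1 hopt
    (fun j => allocWelfare w u (A j ∘ π) - allocWelfare w u (A j)) fun j => ?_).not_gt ?_
  · obtain ⟨l, hl⟩ := hperm π j
    exact ⟨l, by rw [hl, add_sub_cancel]⟩
  · simp only [mul_sub, sum_sub_distrib, sum_mul_allocWelfare_comp,
      ← welfare_eq_sum_mul_allocWelfare, welfare, sub_pos]
    exact sum_lt_sum (fun i _ => mul_le_mul_of_nonneg_left (hle i) (hw i))
      ⟨x, mem_univ x, mul_lt_mul_of_pos_left hlt hwx⟩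

variable (A u) in
open scoped Classical in
theorem two_mul_le_of_eq_half_inf' {ρ : ℝ}
    (hne : (univ.filter fun t : ι × ι × κ =>
        u t.1 (A t.2.2 t.1) < u t.1 (A t.2.2 t.2.1) ∧
        u t.2.1 (A t.2.2 t.1) < u t.2.1 (A t.2.2 t.2.1)).Nonempty)
    (hρ : ρ = (1 / 2) * (univ.filter fun t : ι × ι × κ =>
        u t.1 (A t.2.2 t.1) < u t.1 (A t.2.2 t.2.1) ∧
        u t.2.1 (A t.2.2 t.1) < u t.2.1 (A t.2.2 t.2.1)).inf' hne
        (fun t => (u t.1 (A t.2.2 t.2.1) - u t.1 (A t.2.2 t.1)) /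
          (u t.2.1 (A t.2.2 t.2.1) - u t.2.1 (A t.2.2 t.1))))
    {i h : ι} (j : κ) (hi : u i (A j i) < u i (A j h)) (hh : u h (A j i) < u h (A j h)) :
    2 * ρ * (u h (A j h) - u h (A j i)) ≤ u i (A j h) - u i (A j i) := by
  have hmem : (i, h, j) ∈ univ.filter fun t : ι × ι × κ =>
      u t.1 (A t.2.2 t.1) < u t.1 (A t.2.2 t.2.1) ∧
      u t.2.1 (A t.2.2 t.1) < u t.2.1 (A t.2.2 t.2.1) := by
    simp [hi, hh]
  have hinf := (le_div_iff₀ (sub_pos.mpr hh)).mp (inf'_le (fun t : ι × ι × κ =>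
    (u t.1 (A t.2.2 t.2.1) - u t.1 (A t.2.2 t.1)) /
      (u t.2.1 (A t.2.2 t.2.1) - u t.2.1 (A t.2.2 t.1))) hmem)
  rw [hρ]
  linarith

end MixedAllocation

namespace Function

variable {α : Type*}

theorem exists_perm_eq_of_mem_periodicPts (f : α → α) :
    ∃ π : Equiv.Perm α, (∀ x, π x = f x ∨ π x = x) ∧ ∀ x ∈ periodicPts f, π x = f x := by
  classical
  set π := Equiv.Perm.ofSubtype ((bijOn_periodicPts f).equiv f)
  have hπ : ∀ x ∈ periodicPts f, π x = f x := fun x hx =>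
    Equiv.Perm.ofSubtype_apply_of_mem _ hx
  refine ⟨π, fun x => ?_, hπ⟩
  by_cases hx : x ∈ periodicPts f
  · exact .inl (hπ x hx)
  · exact .inr (Equiv.Perm.ofSubtype_apply_of_not_mem _ hx)

theorem exists_iterate_mem_periodicPts [Fintype α] (f : α → α) (x : α) :
    ∃ t < Fintype.card α, f^[t] x ∈ periodicPts f := by
  obtain ⟨a, b, hab, heq⟩ := Fintype.exists_ne_map_eq_of_card_lt
    (fun t : Fin (Fintype.card α + 1) => f^[t] x) (by simp)
  wlog hlt : a < b generalizing a b
  · exact this b a hab.symm heq.symm (lt_of_le_of_ne (not_lt.mp hlt) hab.symm)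
  refine ⟨a, by omega, mk_mem_periodicPts (n := b - a) (by omega) ?_⟩
  change f^[b - a] (f^[a] x) = f^[a] x
  rw [← iterate_add_apply, Nat.sub_add_cancel hlt.le]
  exact heq.symm

theorem lt_apply_iterate_of_lt_pow_mul (g : α → α) (w : α → ℝ) {ρ ε : ℝ} (hρ0 : 0 ≤ ρ)
    (hρ1 : ρ ≤ 1) (hstep : ∀ i, ε < w i → ρ * w i < w (g i)) {x : α} (hx : 0 ≤ w x) {N : ℕ}
    (hN : ε < ρ ^ N * w x) : ∀ t ≤ N, ε < w (g^[t] x) := by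
  have heavy : ∀ t ≤ N, ρ ^ t * w x ≤ w (g^[t] x) → ε < w (g^[t] x) := fun t ht hle =>
    hN.trans_le ((mul_le_mul_of_nonneg_right (pow_le_pow_of_le_one hρ0 hρ1 ht) hx).trans hle)
  suffices ∀ t ≤ N, ρ ^ t * w x ≤ w (g^[t] x) from fun t ht => heavy t ht (this t ht)
  intro t
  induction t with
  | zero => simp
  | succ t ih =>
    intro ht
    have hle := ih (by omega)
    calc ρ ^ (t + 1) * w x = ρ * (ρ ^ t * w x) := by ring
      _ ≤ ρ * w (g^[t] x) := mul_le_mul_of_nonneg_left hle hρ0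
      _ ≤ w (g^[t + 1] x) := by
        rw [iterate_succ_apply']
        exact (hstep _ (heavy t (by omega) hle)).le

end Function

theorem Finset.exists_inv_card_le_of_sum_eq_one {α : Type*} [Fintype α] {w : α → ℝ}
    (hw : ∑ i, w i = 1) : ∃ i, (Fintype.card α : ℝ)⁻¹ ≤ w i := by
  have hne : (univ : Finset α).Nonempty := nonempty_of_sum_ne_zero (by rw [hw]; exact one_ne_zero)
  have hcard : (Fintype.card α : ℝ) ≠ 0 := by
    rw [← card_univ]
    exact_mod_cast hne.card_pos.ne'
  obtain ⟨i, -, hi⟩ := exists_le_of_sum_le hne (f := fun _ => (Fintype.card α : ℝ)⁻¹) (g := w)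
    (by simp [hw, hcard])
  exact ⟨i, hi⟩

open scoped Classical in
theorem stmt10_general {n m k : ℕ} (A : Fin k → Fin n → Finset (Fin m))
    (u : Fin n → Finset (Fin m) → ℝ)
    (hswap : ∀ j : Fin k, ∀ g h : Fin n, ∃ l : Fin k,
      (∀ i, i ≠ g → i ≠ h → A l i = A j i) ∧ A l g = A j h ∧ A l h = A j g)
    (ρ : ℝ)
    (hne : (Finset.univ.filter fun t : Fin n × Fin n × Fin k =>
        u t.1 (A t.2.2 t.1) < u t.1 (A t.2.2 t.2.1) ∧
        u t.2.1 (A t.2.2 t.1) < u t.2.1 (A t.2.2 t.2.1)).Nonempty)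
    (hρ : ρ = (1 / 2) * (Finset.univ.filter fun t : Fin n × Fin n × Fin k =>
        u t.1 (A t.2.2 t.1) < u t.1 (A t.2.2 t.2.1) ∧
        u t.2.1 (A t.2.2 t.1) < u t.2.1 (A t.2.2 t.2.1)).inf' hne
        (fun t => (u t.1 (A t.2.2 t.2.1) - u t.1 (A t.2.2 t.1)) /
          (u t.2.1 (A t.2.2 t.2.1) - u t.2.1 (A t.2.2 t.1))))
    (hρ0 : 0 < ρ) (hρ1 : ρ ≤ 1)
    (ε : ℝ) (hε : 0 < ε) (hεsmall : ε < ρ ^ n / n)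
    (w : Fin n → ℝ) (hwsum : ∑ i, w i = 1) (hwε : ∀ i, ε ≤ w i)
    (p : Fin k → ℝ) (hp0 : ∀ j, 0 ≤ p j) (hp1 : ∑ j, p j = 1)
    (hP : ∀ q : Fin k → ℝ, (∀ j, 0 ≤ q j) → ∑ j, q j = 1 →
      ∑ i, w i * ∑ j, q j * u i (A j i) ≤ ∑ i, w i * ∑ j, p j * u i (A j i)) :
    ∃ i : Fin n, ε < w i ∧ ∀ h : Fin n,
      ¬ (∑ j, p j * u i (A j i) < ∑ j, p j * u i (A j h)) := by
  open MixedAllocation in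
  have hw : ∀ i, 0 < w i := fun i => hε.trans_le (hwε i)
  have hperm := exists_comp_perm A (exists_comp_swap A hswap)
  by_contra! hall
  have hsucc : ∀ i, ∃ h, value A u p i i ≤ value A u p i h ∧
      (ε < w i → value A u p i i < value A u p i h) := fun i => by
    by_cases hi : ε < w i
    · obtain ⟨h, hh⟩ := hall i hi
      exact ⟨h, hh.le, fun _ => hh⟩
    · exact ⟨i, le_rfl, fun h => absurd h hi⟩
  choose f hf_le hf_lt using hsucc
  have hstep : ∀ i, ε < w i → ρ * w i < w (f i) := fun i hi =>
    mul_lt_of_value_lt hp0 hp1 hP (hperm _) (two_mul_le_of_eq_half_inf' A u hne hρ)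
      (hw i) (hw _).le (hf_lt i hi)
  obtain ⟨i₀, hi₀⟩ := Finset.exists_inv_card_le_of_sum_eq_one hwsum
  have hheavy := lt_apply_iterate_of_lt_pow_mul f w hρ0.le hρ1 hstep (hw i₀).le (N := n) <|
    hεsmall.trans_le (by rw [div_eq_mul_inv]; gcongr; simpa using hi₀)
  obtain ⟨t, ht, hper⟩ := exists_iterate_mem_periodicPts f i₀
  obtain ⟨π, hπ, hπf⟩ := exists_perm_eq_of_mem_periodicPts f
  refine not_value_lt_of_perm hp0 hp1 hP hperm (fun i => (hw i).le) π (fun i => ?_)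
    (hw (f^[t] i₀)) ?_
  · rcases hπ i with h | h <;> rw [h]
    exact hf_le i
  · rw [hπf _ hper]
    exact hf_lt _ (hheavy t (by simpa using ht.le))

open scoped Classical in
/-- If p ∈ P(w) with w in the ε-simplex, ε < ρⁿ/n where ρ ∈ (0,1] is
the envy-threshold constant, then some player i with w_i > ε envies no one. -/
theorem stmt10 {n m k : ℕ} (A : Fin k → Fin n → Finset (Fin m))
    (u : Fin n → Finset (Fin m) → ℝ)
    (hu : ∀ i S, 1 ≤ u i S ∧ u i S ≤ 2)
    (hswap : ∀ j : Fin k, ∀ g h : Fin n, ∃ l : Fin k,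
      (∀ i, i ≠ g → i ≠ h → A l i = A j i) ∧ A l g = A j h ∧ A l h = A j g)
    (ρ : ℝ)
    (hne : (Finset.univ.filter fun t : Fin n × Fin n × Fin k =>
        u t.1 (A t.2.2 t.1) < u t.1 (A t.2.2 t.2.1) ∧
        u t.2.1 (A t.2.2 t.1) < u t.2.1 (A t.2.2 t.2.1)).Nonempty)
    (hρ : ρ = (1 / 2) * (Finset.univ.filter fun t : Fin n × Fin n × Fin k =>
        u t.1 (A t.2.2 t.1) < u t.1 (A t.2.2 t.2.1) ∧
        u t.2.1 (A t.2.2 t.1) < u t.2.1 (A t.2.2 t.2.1)).inf' hne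
        (fun t => (u t.1 (A t.2.2 t.2.1) - u t.1 (A t.2.2 t.1)) /
          (u t.2.1 (A t.2.2 t.2.1) - u t.2.1 (A t.2.2 t.1))))
    (hρ0 : 0 < ρ) (hρ1 : ρ ≤ 1)
    (ε : ℝ) (hε : 0 < ε) (hεsmall : ε < ρ ^ n / n)
    (w : Fin n → ℝ) (hwsum : ∑ i, w i = 1) (hwε : ∀ i, ε ≤ w i)
    (p : Fin k → ℝ) (hp0 : ∀ j, 0 ≤ p j) (hp1 : ∑ j, p j = 1)
    (hP : ∀ q : Fin k → ℝ, (∀ j, 0 ≤ q j) → ∑ j, q j = 1 →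
      ∑ i, w i * ∑ j, q j * u i (A j i) ≤ ∑ i, w i * ∑ j, p j * u i (A j i)) :
    ∃ i : Fin n, ε < w i ∧ ∀ h : Fin n,
      ¬ (∑ j, p j * u i (A j i) < ∑ j, p j * u i (A j h)) :=
  stmt10_general A u hswap ρ hne hρ hρ0 hρ1 ε hε hεsmall w hwsum hwε p hp0 hp1 hP
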